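/- arXiv:2206.01012 — 2 statements merged into one kernel-verified Lean document; each statement's English description precedes it below -/
import Mathlib

section
/- With the spike-and-slab mixture of the previous context (0<ν₀<ν₁, α∈(0,1)), the posterior inclusion probability satisfies P(δ=1|β) ≥ 1/2 if and only if |β| ≥ s(ν₀,ν₁,α), where s(ν₀,ν₁,α) = sqrt( 2 ν₀ν₁/(ν₁-ν₀) · log( sqrt(ν₁/ν₀) · (1-α)/α ) ), provided the expression under the square root is nonnegative. -/
/-- Centered Gaussian density with variance ν. -/
noncomputable def gaussDensity (ν x : ℝ) : ℝ :=
  (Real.sqrt (2 * Real.pi * ν))⁻¹ * Real.exp (-x ^ 2 / (2 * ν))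

/-!
The posterior odds are `α φ_{ν₁}(β) / ((1 - α) φ_{ν₀}(β))`, and `P(δ = 1 | β) ≥ 1/2` says that
they are at least `1`. The log of the likelihood ratio is the quadratic
`β² (ν₁ - ν₀) / (2 ν₀ ν₁) - log √(ν₁/ν₀)`, so the condition reads
`log (√(ν₁/ν₀) (1 - α) / α) ≤ β² (ν₁ - ν₀) / (2 ν₀ ν₁)`, i.e. `s² ≤ β²`.
-/

open Real

lemma gaussDensity_pos {ν : ℝ} (hν : 0 < ν) (x : ℝ) : 0 < gaussDensity ν x := by
  unfold gaussDensity
  have := pi_pos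
  positivity

lemma log_gaussDensity_div_gaussDensity {ν₀ ν₁ : ℝ} (h₀ : 0 < ν₀) (h₁ : 0 < ν₁) (x : ℝ) :
    log (gaussDensity ν₁ x / gaussDensity ν₀ x) =
      x ^ 2 * ((ν₁ - ν₀) / (2 * ν₀ * ν₁)) - log (√(ν₁ / ν₀)) := by
  have := pi_pos
  have log_gaussDensity : ∀ ν, 0 < ν →
      log (gaussDensity ν x) = -(log 2 + log π + log ν) / 2 - x ^ 2 / (2 * ν) := by
    intro ν hν
    rw [gaussDensity, log_mul (by positivity) (exp_pos _).ne', log_inv, log_exp,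
      log_sqrt (by positivity), log_mul (by positivity) hν.ne', log_mul two_ne_zero pi_ne_zero]
    ring
  rw [log_div (gaussDensity_pos h₁ x).ne' (gaussDensity_pos h₀ x).ne',
    log_gaussDensity ν₁ h₁, log_gaussDensity ν₀ h₀, log_sqrt (by positivity),
    log_div h₁.ne' h₀.ne']
  field_simp
  ring

lemma half_le_div_add_iff {a b : ℝ} (hab : 0 < a + b) : 1 / 2 ≤ a / (a + b) ↔ b ≤ a := by
  rw [le_div_iff₀ hab]
  constructor <;> intro h <;> linarith

lemma half_le_mixture_weight_iff {α p₀ p₁ : ℝ} (hα : α ∈ Set.Ioo (0 : ℝ) 1)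
    (hp₀ : 0 < p₀) (hp₁ : 0 < p₁) :
    1 / 2 ≤ α * p₁ / (α * p₁ + (1 - α) * p₀) ↔ (1 - α) / α ≤ p₁ / p₀ := by
  obtain ⟨hα₀, hα₁⟩ := hα
  have h1α : 0 < 1 - α := sub_pos.2 hα₁
  rw [half_le_div_add_iff (by positivity), div_le_div_iff₀ hα₀ hp₀, mul_comm α]

theorem stmt_1_general (ν₀ ν₁ α β : ℝ) (h₀ : 0 < ν₀) (h₁ : ν₀ < ν₁) (hα : α ∈ Set.Ioo (0:ℝ) 1) :
    (1 / 2 ≤ α * gaussDensity ν₁ β /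
        (α * gaussDensity ν₁ β + (1 - α) * gaussDensity ν₀ β))
      ↔ Real.sqrt (2 * (ν₀ * ν₁ / (ν₁ - ν₀)) *
          Real.log (Real.sqrt (ν₁ / ν₀) * (1 - α) / α)) ≤ |β| := by
  obtain ⟨hα₀, hα₁⟩ := hα
  have hν₁ : 0 < ν₁ := h₀.trans h₁
  have hc : 0 < (ν₁ - ν₀) / (2 * ν₀ * ν₁) := div_pos (sub_pos.2 h₁) (by positivity)
  have hlog : log (√(ν₁ / ν₀) * (1 - α) / α) = log (√(ν₁ / ν₀)) + log ((1 - α) / α) := by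
    rw [mul_div_assoc, log_mul (by positivity) (div_pos (sub_pos.2 hα₁) hα₀).ne']
  have hinv : 2 * (ν₀ * ν₁ / (ν₁ - ν₀)) = ((ν₁ - ν₀) / (2 * ν₀ * ν₁))⁻¹ := by
    field_simp
  rw [half_le_mixture_weight_iff ⟨hα₀, hα₁⟩ (gaussDensity_pos h₀ β) (gaussDensity_pos hν₁ β),
    ← log_le_log_iff (div_pos (sub_pos.2 hα₁) hα₀)
      (div_pos (gaussDensity_pos hν₁ β) (gaussDensity_pos h₀ β)),
    log_gaussDensity_div_gaussDensity h₀ hν₁, sqrt_le_left (abs_nonneg β), sq_abs, hinv,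
    inv_mul_le_iff₀ hc, hlog]
  constructor <;> intro h <;> linarith

/-- The spike-and-slab posterior inclusion probability exceeds 1/2 iff |β| exceeds
the threshold s(ν₀,ν₁,α). -/
theorem stmt_1 (ν₀ ν₁ α β : ℝ) (h₀ : 0 < ν₀) (h₁ : ν₀ < ν₁) (hα : α ∈ Set.Ioo (0:ℝ) 1)
    (hthr : 1 ≤ Real.sqrt (ν₁ / ν₀) * (1 - α) / α) :
    (1 / 2 ≤ α * gaussDensity ν₁ β /
        (α * gaussDensity ν₁ β + (1 - α) * gaussDensity ν₀ β))
      ↔ Real.sqrt (2 * (ν₀ * ν₁ / (ν₁ - ν₀)) *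
          Real.log (Real.sqrt (ν₁ / ν₀) * (1 - α) / α)) ≤ |β| :=
  stmt_1_general ν₀ ν₁ α β h₀ h₁ hα
end

section
/- Fix ν₁ > 0 and α ∈ (0,1). The threshold s(ν₀,ν₁,α) = sqrt( 2ν₀ν₁/(ν₁-ν₀) · log(√(ν₁/ν₀)·(1-α)/α) ), viewed as a function of ν₀ on an interval (0, ν₀^max) where it is well defined, is strictly increasing in ν₀ near 0; hence larger spike variances ν₀ lead to sparser selected models (fewer coefficients exceed the threshold). -/
/-! With `K = ν₁ ((1 - α) / α)²`, the squared threshold is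
`ν₁ K (ν₁ - ν₀)⁻¹ · negMulLog (ν₀ / K)`, where `negMulLog x = -x log x`. Both factors are
positive and strictly increasing for `ν₀ < min ν₁ (K / e)`: the first trivially, the second
because `negMulLog` increases up to its maximum at `1 / e`. -/

open Real Set

lemma StrictMonoOn.mul_of_nonneg {α M₀ : Type*} [Preorder α] [MulZeroClass M₀] [Preorder M₀]
    [PosMulStrictMono M₀] [MulPosMono M₀] {f g : α → M₀} {s : Set α}
    (hf : StrictMonoOn f s) (hg : StrictMonoOn g s)
    (hf₀ : ∀ x ∈ s, 0 ≤ f x) (hg₀ : ∀ x ∈ s, 0 ≤ g x) :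
    StrictMonoOn (fun x ↦ f x * g x) s :=
  fun _ ha _ hb h ↦ mul_lt_mul'' (hf ha hb h) (hg ha hb h) (hf₀ _ ha) (hg₀ _ ha)

lemma strictMonoOn_inv_sub (c : ℝ) : StrictMonoOn (fun t ↦ (c - t)⁻¹) (Iio c) :=
  fun _ ha _ hb h ↦ (inv_lt_inv₀ (sub_pos.2 ha) (sub_pos.2 hb)).2 (by linarith)

namespace Real

lemma negMulLog_pos {x : ℝ} (h₀ : 0 < x) (h₁ : x < 1) : 0 < negMulLog x := by
  simpa only [negMulLog_eq_neg, neg_pos] using mul_log_neg h₀ h₁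

lemma strictMonoOn_negMulLog : StrictMonoOn negMulLog (Icc 0 (exp (-1))) := by
  refine strictMonoOn_of_deriv_pos (convex_Icc _ _) continuous_negMulLog.continuousOn ?_
  intro x hx
  rw [interior_Icc] at hx
  obtain ⟨hx₀, hx₁⟩ := hx
  have hlog : log x < -1 := (log_lt_iff_lt_exp hx₀).2 hx₁
  rw [deriv_negMulLog hx₀.ne']
  linarith

lemma mul_log_sqrt_div_mul {ν t r : ℝ} (hν : 0 < ν) (ht : 0 < t) (hr : 0 < r) :
    t * log (√(ν / t) * r) = ν * r ^ 2 / 2 * negMulLog (t / (ν * r ^ 2)) := by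
  have hsqrt : √(ν / t) * r = √((t / (ν * r ^ 2))⁻¹) := by
    rw [inv_div, mul_div_right_comm, sqrt_mul' _ (sq_nonneg r), sqrt_sq hr.le]
  rw [hsqrt, log_sqrt (by positivity), log_inv, negMulLog]
  field_simp

end Real

lemma mem_Ioo_min_mul_exp {c K t : ℝ} (hK : 0 < K) (ht : t ∈ Ioo 0 (min c (K * exp (-1)))) :
    t < c ∧ t / K ∈ Ioo 0 (exp (-1)) :=
  ⟨ht.2.trans_le (min_le_left _ _),
    div_pos ht.1 hK, (div_lt_iff₀ hK).2 (by linarith [ht.2.trans_le (min_le_right _ _)])⟩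

lemma inv_sub_mul_negMulLog_div_pos {c K t : ℝ} (hK : 0 < K)
    (ht : t ∈ Ioo 0 (min c (K * exp (-1)))) : 0 < (c - t)⁻¹ * negMulLog (t / K) := by
  obtain ⟨htc, htK₀, htK₁⟩ := mem_Ioo_min_mul_exp hK ht
  exact mul_pos (inv_pos.2 (sub_pos.2 htc))
    (negMulLog_pos htK₀ (htK₁.trans (exp_lt_one_iff.2 (by norm_num))))

lemma strictMonoOn_inv_sub_mul_negMulLog_div {c K : ℝ} (hK : 0 < K) :
    StrictMonoOn (fun t ↦ (c - t)⁻¹ * negMulLog (t / K)) (Ioo 0 (min c (K * exp (-1)))) := by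
  refine StrictMonoOn.mul_of_nonneg
    (fun a ha b hb h ↦ strictMonoOn_inv_sub c (mem_Ioo_min_mul_exp hK ha).1
      (mem_Ioo_min_mul_exp hK hb).1 h)
    (fun a ha b hb h ↦ strictMonoOn_negMulLog (Ioo_subset_Icc_self (mem_Ioo_min_mul_exp hK ha).2)
      (Ioo_subset_Icc_self (mem_Ioo_min_mul_exp hK hb).2) (div_lt_div_of_pos_right h hK))
    (fun t ht ↦ (inv_pos.2 (sub_pos.2 (mem_Ioo_min_mul_exp hK ht).1)).le)
    (fun t ht ↦ (negMulLog_pos (mem_Ioo_min_mul_exp hK ht).2.1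
      ((mem_Ioo_min_mul_exp hK ht).2.2.trans (exp_lt_one_iff.2 (by norm_num)))).le)

/-- The spike-and-slab selection threshold s(ν₀,ν₁,α), as a function of the spike
variance ν₀, is strictly increasing near 0: there exists ε > 0 such that it is
strictly increasing on (0, ε). -/
theorem stmt_18 (ν₁ α : ℝ) (hν₁ : 0 < ν₁) (hα : α ∈ Set.Ioo (0:ℝ) 1) :
    ∃ ε > 0, StrictMonoOn
      (fun ν₀ : ℝ => Real.sqrt (2 * (ν₀ * ν₁ / (ν₁ - ν₀)) *
        Real.log (Real.sqrt (ν₁ / ν₀) * (1 - α) / α)))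
      (Set.Ioo 0 ε) := by
  obtain ⟨hα₀, hα₁⟩ := hα
  have hr : 0 < (1 - α) / α := div_pos (by linarith) hα₀
  set K := ν₁ * ((1 - α) / α) ^ 2
  have hK : 0 < K := by positivity
  have hsq : ∀ t > 0, 2 * (t * ν₁ / (ν₁ - t)) * log (√(ν₁ / t) * (1 - α) / α)
      = ν₁ * K * ((ν₁ - t)⁻¹ * negMulLog (t / K)) := fun t ht ↦ calc
    _ = 2 * ν₁ / (ν₁ - t) * (t * log (√(ν₁ / t) * ((1 - α) / α))) := by ring_nf
    _ = _ := by rw [mul_log_sqrt_div_mul hν₁ ht hr]; ring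
  refine ⟨min ν₁ (K * exp (-1)), by positivity, fun a ha b hb h ↦ ?_⟩
  simp only [hsq a ha.1, hsq b hb.1]
  exact sqrt_lt_sqrt (by positivity [inv_sub_mul_negMulLog_div_pos hK ha])
    (mul_lt_mul_of_pos_left (strictMonoOn_inv_sub_mul_negMulLog_div hK ha hb h) (by positivity))
end
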